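/- Assume the full-support assumption, fix K linearly independent basis surplus vectors φ^1, …, φ^K : 𝒳×𝒴 → ℝ, and for λ ∈ ℝ^K set Φ^λ = Σ_{k=1}^K λ_k φ^k. For each λ let μ^λ denote the (unique) maximizer of μ ↦ Σ_{x,y} μ_xy Φ^λ_xy + 𝓔(μ, n, m) over feasible matchings. Let μ̂ be a feasible matching with μ̂_xy > 0, μ̂_x0 > 0, μ̂_0y > 0 for all x, y, and suppose λ̂ ∈ ℝ^K maximizes the (globally concave) function λ ↦ Σ_{x,y} μ̂_xy Φ^λ_xy − 𝒲(Φ^λ, n, m) over ℝ^K. Then the moment-matching estimator equates predicted and observed comoments: Σ_{x,y} μ^{λ̂}_xy φ^k_xy = Σ_{x,y} μ̂_xy φ^k_xy for every k = 1, …, K. -/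
import Mathlib


open MeasureTheory

noncomputable section

/-- Extension of `U : ι → ℝ` to `Option ι` by the value `0` at `none`. -/
def optExt {ι : Type*} (U : ι → ℝ) : Option ι → ℝ := fun io => io.elim 0 U

/-- Maximum of a function over a finite nonempty type. -/
def fmax {ι : Type*} [Fintype ι] [Nonempty ι] (f : ι → ℝ) : ℝ :=
  Finset.univ.sup' Finset.univ_nonempty f

/-- The Emax operator `G(U) = ∫ max_{î ∈ ι₀} (U_î + ε_î) dP(ε)`. -/
def Emax {ι : Type*} [Fintype ι] [Nonempty ι]
    (P : Measure (Option ι → ℝ)) (U : ι → ℝ) : ℝ :=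
  ∫ ε, fmax (fun io => optExt U io + ε io) ∂P

/-- The Legendre–Fenchel transform of the Emax operator, valued in `EReal`. -/
def EmaxStar {ι : Type*} [Fintype ι] [Nonempty ι]
    (P : Measure (Option ι → ℝ)) (ν : ι → ℝ) : EReal :=
  ⨆ U : ι → ℝ, (((∑ i, ν i * U i) - Emax P U : ℝ) : EReal)

open Filter Topology

set_option linter.unusedSectionVars false

lemma ereal_coe_sum {α : Type*} (s : Finset α) (f : α → ℝ) :
    ((∑ i ∈ s, f i : ℝ) : EReal) = ∑ i ∈ s, ((f i : ℝ) : EReal) :=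
  map_sum (⟨⟨Real.toEReal, EReal.coe_zero⟩, EReal.coe_add⟩ : ℝ →+ EReal) f s

section A
variable {ι : Type*} [Fintype ι] [Nonempty ι]

lemma le_fmax (f : ι → ℝ) (i : ι) : f i ≤ fmax f := Finset.le_sup' f (Finset.mem_univ i)

lemma fmax_le {f : ι → ℝ} {c : ℝ} (h : ∀ i, f i ≤ c) : fmax f ≤ c :=
  Finset.sup'_le _ _ fun i _ => h i

lemma abs_fmax_le (f : ι → ℝ) : |fmax f| ≤ fmax (fun i => |f i|) := by
  rw [abs_le]
  constructor
  · obtain ⟨i⟩ := (inferInstance : Nonempty ι)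
    calc -fmax (fun i => |f i|) ≤ -|f i| := by simpa using le_fmax (fun i => |f i|) i
    _ ≤ f i := neg_abs_le _
    _ ≤ fmax f := le_fmax f i
  · exact fmax_le fun i => (le_abs_self _).trans (le_fmax (fun i => |f i|) i)

lemma measurable_fmax_shift (g : Option ι → ℝ) :
    Measurable fun ε : Option ι → ℝ => fmax (fun io => g io + ε io) := by
  have h := Finset.measurable_sup' (s := (Finset.univ : Finset (Option ι)))
    Finset.univ_nonempty (f := fun io (ε : Option ι → ℝ) => g io + ε io)
    (fun io _ => measurable_const.add (measurable_pi_apply io))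
  have he : (Finset.univ.sup' Finset.univ_nonempty fun io (ε : Option ι → ℝ) => g io + ε io)
      = fun ε : Option ι → ℝ => fmax fun io => g io + ε io := by
    funext ε
    rw [Finset.sup'_apply, fmax]
  rwa [he] at h

variable (P : Measure (Option ι → ℝ)) [IsProbabilityMeasure P]
  (hPint : Integrable (fun ε => fmax (fun io => |ε io|)) P)

include hPint

lemma integrable_eval (io : Option ι) : Integrable (fun ε : Option ι → ℝ => ε io) P := by
  refine Integrable.mono' hPint (measurable_pi_apply io).aestronglyMeasurable ?_
  filter_upwards with ε
  exact le_fmax (fun jo => |ε jo|) io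

lemma integrable_emax (U : ι → ℝ) :
    Integrable (fun ε => fmax (fun io => optExt U io + ε io)) P := by
  refine Integrable.mono' (g := fun ε => fmax (fun io => |optExt U io|) + fmax (fun io => |ε io|))
    ((integrable_const _).add hPint) ((measurable_fmax_shift _).aestronglyMeasurable) ?_
  filter_upwards with ε
  refine (abs_fmax_le _).trans (fmax_le fun io => ?_)
  calc |optExt U io + ε io| ≤ |optExt U io| + |ε io| := abs_add_le _ _
  _ ≤ fmax (fun jo => |optExt U jo|) + fmax (fun jo => |ε jo|) :=
      add_le_add (le_fmax (fun jo => |optExt U jo|) io) (le_fmax (fun jo => |ε jo|) io)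

lemma conv_le_emax (U : ι → ℝ) (w : Option ι → ℝ) (hw : ∀ io, 0 ≤ w io)
    (hw1 : ∑ io, w io = 1) :
    ∑ io, w io * (optExt U io + ∫ ε, ε io ∂P) ≤ Emax P U := by
  have hint : ∀ io : Option ι, Integrable (fun ε => w io * (optExt U io + ε io)) P :=
    fun io => (((integrable_const _).add (integrable_eval P hPint io)).const_mul _)
  have key : ∫ ε, (∑ io, w io * (optExt U io + ε io)) ∂P
      = ∑ io, w io * (optExt U io + ∫ ε, ε io ∂P) := by
    rw [integral_finset_sum _ fun io _ => hint io]
    refine Finset.sum_congr rfl fun io _ => ?_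
    rw [integral_const_mul, integral_add (integrable_const _) (integrable_eval P hPint io),
      integral_const]
    simp
  rw [← key, Emax]
  refine integral_mono (integrable_finset_sum _ fun io _ => hint io)
    (integrable_emax P hPint U) fun ε => ?_
  calc ∑ io, w io * (optExt U io + ε io)
      ≤ ∑ io, w io * fmax (fun jo => optExt U jo + ε jo) :=
        Finset.sum_le_sum fun io _ => mul_le_mul_of_nonneg_left (le_fmax (fun jo => optExt U jo + ε jo) io) (hw io)
  _ = fmax (fun jo => optExt U jo + ε jo) := by rw [← Finset.sum_mul, hw1, one_mul]

lemma term_le_C {ν : ι → ℝ} (hν : ∀ i, 0 ≤ ν i) (hν1 : ∑ i, ν i ≤ 1) (U : ι → ℝ) :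
    (∑ i, ν i * U i) - Emax P U ≤ ∫ ε, fmax (fun io => |ε io|) ∂P := by
  set C := ∫ ε, fmax (fun io => |ε io|) ∂P with hC
  set w : Option ι → ℝ := fun io => io.elim (1 - ∑ i, ν i) ν with hw
  have hwpos : ∀ io, 0 ≤ w io := by
    rintro (_|i)
    · simpa [hw] using hν1
    · exact hν i
  have hw1 : ∑ io, w io = 1 := by
    rw [Fintype.sum_option]
    simp [hw]
  have h1 := conv_le_emax P hPint U w hwpos hw1
  have habs : ∀ io : Option ι, |∫ ε, ε io ∂P| ≤ C := by
    intro io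
    rw [hC]
    calc |∫ ε, ε io ∂P| ≤ ∫ ε, |ε io| ∂P := by
          simpa [Real.norm_eq_abs] using
            norm_integral_le_integral_norm (μ := P) (f := fun ε : Option ι → ℝ => ε io)
    _ ≤ _ := integral_mono (integrable_eval P hPint io).abs hPint
        (fun ε => le_fmax (fun jo => |ε jo|) io)
  have hCnn : 0 ≤ C := le_trans (abs_nonneg _) (habs none)
  have h2 : ∑ io, w io * (optExt U io + ∫ ε, ε io ∂P)
      = ∑ i, ν i * U i + ∑ io, w io * ∫ ε, ε io ∂P := by
    rw [Fintype.sum_option, Fintype.sum_option]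
    simp only [hw, optExt, Option.elim, mul_add, Finset.sum_add_distrib]
    ring
  have h3 : -C ≤ ∑ io, w io * ∫ ε, ε io ∂P := by
    calc -C = ∑ io, w io * (-C) := by rw [← Finset.sum_mul, hw1, one_mul]
    _ ≤ _ := Finset.sum_le_sum fun io _ => by
        have := (abs_le.mp (habs io)).1
        nlinarith [hwpos io]
  have := h1
  rw [h2] at this
  linarith

lemma emaxStar_le {ν : ι → ℝ} (hν : ∀ i, 0 ≤ ν i) (hν1 : ∑ i, ν i ≤ 1) :
    EmaxStar P ν ≤ ((∫ ε, fmax (fun io => |ε io|) ∂P : ℝ) : EReal) :=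
  iSup_le fun U => EReal.coe_le_coe_iff.mpr (term_le_C P hPint hν hν1 U)

omit hPint in
lemma emaxStar_ge (ν : ι → ℝ) : ((-Emax P 0 : ℝ) : EReal) ≤ EmaxStar P ν :=
  le_iSup_of_le 0 (by simp)

lemma emaxStar_coe_toReal {ν : ι → ℝ} (hν : ∀ i, 0 ≤ ν i) (hν1 : ∑ i, ν i ≤ 1) :
    (((EmaxStar P ν).toReal : ℝ) : EReal) = EmaxStar P ν := by
  refine EReal.coe_toReal ?_ ?_
  · exact fun h => by simpa [h] using emaxStar_le P hPint hν hν1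
  · exact fun h => by simpa [h] using emaxStar_ge P ν

lemma term_le_rstar {ν : ι → ℝ} (hν : ∀ i, 0 ≤ ν i) (hν1 : ∑ i, ν i ≤ 1) (U : ι → ℝ) :
    (∑ i, ν i * U i) - Emax P U ≤ (EmaxStar P ν).toReal := by
  rw [← EReal.coe_le_coe_iff, emaxStar_coe_toReal P hPint hν hν1]
  exact le_iSup_of_le U le_rfl

lemma rstar_lt {ν : ι → ℝ} (hν : ∀ i, 0 ≤ ν i) (hν1 : ∑ i, ν i ≤ 1)
    {ε : ℝ} (hε : 0 < ε) :
    ∃ U : ι → ℝ, (EmaxStar P ν).toReal - ε < (∑ i, ν i * U i) - Emax P U := by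
  set r := (EmaxStar P ν).toReal with hr
  have hlt : ((r - ε : ℝ) : EReal) < EmaxStar P ν := by
    rw [← emaxStar_coe_toReal P hPint hν hν1]
    exact_mod_cast sub_lt_self r hε
  obtain ⟨U, hU⟩ := lt_iSup_iff.mp hlt
  exact ⟨U, EReal.coe_lt_coe_iff.mp hU⟩

end A

variable {X Y : Type*} [Fintype X] [Nonempty X] [DecidableEq X]
  [Fintype Y] [Nonempty Y] [DecidableEq Y]

/-- Aggregate welfare of men: `G(U, n) = Σ_x n_x G_x(U_{x·})`. -/
def GG (P : X → Measure (Option Y → ℝ)) (n : X → ℝ) (U : X → Y → ℝ) : ℝ :=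
  ∑ x, n x * Emax (P x) (U x)

/-- Aggregate welfare of women: `H(V, m) = Σ_y m_y H_y(V_{·y})`. -/
def HH (Q : Y → Measure (Option X → ℝ)) (m : Y → ℝ) (V : X → Y → ℝ) : ℝ :=
  ∑ y, m y * Emax (Q y) (fun x => V x y)

/-- A feasible matching. -/
def Feasible (n : X → ℝ) (m : Y → ℝ) (μ : X → Y → ℝ) : Prop :=
  (∀ x y, 0 ≤ μ x y) ∧ (∀ x, ∑ y, μ x y ≤ n x) ∧ (∀ y, ∑ x, μ x y ≤ m y)

/-- The generalized entropy of matching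
`𝓔(μ, n, m) = −Σ_x n_x G_x*((μ_xy/n_x)_y) − Σ_y m_y H_y*((μ_xy/m_y)_x)`. -/
def Ent (P : X → Measure (Option Y → ℝ)) (Q : Y → Measure (Option X → ℝ))
    (n : X → ℝ) (m : Y → ℝ) (μ : X → Y → ℝ) : EReal :=
  -(∑ x, ((n x : ℝ) : EReal) * EmaxStar (P x) (fun y => μ x y / n x))
    - ∑ y, ((m y : ℝ) : EReal) * EmaxStar (Q y) (fun x => μ x y / m y)

/-- The social gain of a matching `μ`: `Σ_{x,y} μ_xy Φ_xy + 𝓔(μ, n, m)`. -/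
def SocialGain (P : X → Measure (Option Y → ℝ)) (Q : Y → Measure (Option X → ℝ))
    (n : X → ℝ) (m : Y → ℝ) (Φ : X → Y → ℝ) (μ : X → Y → ℝ) : EReal :=
  ((∑ x, ∑ y, μ x y * Φ x y : ℝ) : EReal) + Ent P Q n m μ

/-- The social welfare `𝒲(Φ, n, m)`. -/
def Welfare (P : X → Measure (Option Y → ℝ)) (Q : Y → Measure (Option X → ℝ))
    (n : X → ℝ) (m : Y → ℝ) (Φ : X → Y → ℝ) : EReal :=
  ⨆ μ : {μ : X → Y → ℝ // Feasible n m μ}, SocialGain P Q n m Φ μ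

/-- Full support: a measure charges every nonempty open set. -/
def HasFullSupport {α : Type*} [TopologicalSpace α] [MeasurableSpace α]
    (P : Measure α) : Prop :=
  ∀ s : Set α, IsOpen s → s.Nonempty → 0 < P s

/-- The social welfare, as a real number. -/
def WelfareR (P : X → Measure (Option Y → ℝ)) (Q : Y → Measure (Option X → ℝ))
    (n : X → ℝ) (m : Y → ℝ) (Φ : X → Y → ℝ) : ℝ :=
  (Welfare P Q n m Φ).toReal

/-- **Moment matching (Theorem 6.1).** In a semilinear model
`Φ^λ = Σ_k λ_k φ^k`, the moment-matching estimator `λ̂` — a maximizer of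
`λ ↦ Σ μ̂ Φ^λ − 𝒲(Φ^λ)` — equates the comoments predicted by the model with
the observed comoments. -/
theorem moment_matching_equates_comoments
    (P : X → Measure (Option Y → ℝ)) (Q : Y → Measure (Option X → ℝ))
    [∀ x, IsProbabilityMeasure (P x)] [∀ y, IsProbabilityMeasure (Q y)]
    (hPint : ∀ x, Integrable (fun ε => fmax (fun yo => |ε yo|)) (P x))
    (hQint : ∀ y, Integrable (fun η => fmax (fun xo => |η xo|)) (Q y))
    (hPsupp : ∀ x, HasFullSupport (P x))
    (hQsupp : ∀ y, HasFullSupport (Q y))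
    (hPac : ∀ x, P x ≪ (volume : Measure (Option Y → ℝ)))
    (hQac : ∀ y, Q y ≪ (volume : Measure (Option X → ℝ)))
    (n : X → ℝ) (m : Y → ℝ) (hn : ∀ x, 0 < n x) (hm : ∀ y, 0 < m y)
    -- the linearly independent basis surplus vectors
    (K : ℕ) (hK : 0 < K) (φ : Fin K → X → Y → ℝ)
    (hφ : LinearIndependent ℝ φ)
    -- μ^λ is the unique maximizer of the social gain for surplus Φ^λ
    (muOf : (Fin K → ℝ) → X → Y → ℝ)
    (hμfeas : ∀ lam, Feasible n m (muOf lam))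
    (hμmax : ∀ lam (μ' : X → Y → ℝ), Feasible n m μ' →
      SocialGain P Q n m (fun x y => ∑ k, lam k * φ k x y) μ' ≤
        SocialGain P Q n m (fun x y => ∑ k, lam k * φ k x y) (muOf lam))
    (hμuniq : ∀ lam (μ' : X → Y → ℝ), Feasible n m μ' →
      (∀ μ'' : X → Y → ℝ, Feasible n m μ'' →
        SocialGain P Q n m (fun x y => ∑ k, lam k * φ k x y) μ'' ≤
          SocialGain P Q n m (fun x y => ∑ k, lam k * φ k x y) μ') →
      μ' = muOf lam)
    -- the observed matching, strictly interior
    (μhat : X → Y → ℝ) (hhatfeas : Feasible n m μhat)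
    (hhatpos : ∀ x y, 0 < μhat x y)
    (hhatx0 : ∀ x, 0 < n x - ∑ y, μhat x y)
    (hhat0y : ∀ y, 0 < m y - ∑ x, μhat x y)
    -- the moment-matching estimator
    (lamhat : Fin K → ℝ)
    (hlamhat : ∀ lam : Fin K → ℝ,
      (∑ x, ∑ y, μhat x y * ∑ k, lam k * φ k x y) -
          WelfareR P Q n m (fun x y => ∑ k, lam k * φ k x y) ≤
        (∑ x, ∑ y, μhat x y * ∑ k, lamhat k * φ k x y) -
          WelfareR P Q n m (fun x y => ∑ k, lamhat k * φ k x y)) :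
    ∀ k : Fin K,
      ∑ x, ∑ y, muOf lamhat x y * φ k x y = ∑ x, ∑ y, μhat x y * φ k x y := by

  classical
  -- real-valued entropy
  set entR : (X → Y → ℝ) → ℝ := fun μ =>
      -(∑ x, n x * (EmaxStar (P x) (fun y => μ x y / n x)).toReal)
        - ∑ y, m y * (EmaxStar (Q y) (fun x => μ x y / m y)).toReal with hentR
  have hνx : ∀ (μ : X → Y → ℝ), Feasible n m μ → ∀ x,
      (∀ y, 0 ≤ μ x y / n x) ∧ ((∑ y, μ x y / n x) ≤ 1) := by
    intro μ hf x
    refine ⟨fun y => div_nonneg (hf.1 x y) (hn x).le, ?_⟩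
    rw [← Finset.sum_div]
    exact (div_le_one (hn x)).mpr (hf.2.1 x)
  have hνy : ∀ (μ : X → Y → ℝ), Feasible n m μ → ∀ y,
      (∀ x, 0 ≤ μ x y / m y) ∧ ((∑ x, μ x y / m y) ≤ 1) := by
    intro μ hf y
    refine ⟨fun x => div_nonneg (hf.1 x y) (hm y).le, ?_⟩
    rw [← Finset.sum_div]
    exact (div_le_one (hm y)).mpr (hf.2.2 y)
  have hEnt : ∀ μ, Feasible n m μ → Ent P Q n m μ = ((entR μ : ℝ) : EReal) := by
    intro μ hf
    have h1 : (∑ x, ((n x : ℝ) : EReal) * EmaxStar (P x) (fun y => μ x y / n x))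
        = ((∑ x, n x * (EmaxStar (P x) (fun y => μ x y / n x)).toReal : ℝ) : EReal) := by
      rw [ereal_coe_sum]
      refine Finset.sum_congr rfl fun x _ => ?_
      rw [EReal.coe_mul, emaxStar_coe_toReal (P x) (hPint x) (hνx μ hf x).1 (hνx μ hf x).2]
    have h2 : (∑ y, ((m y : ℝ) : EReal) * EmaxStar (Q y) (fun x => μ x y / m y))
        = ((∑ y, m y * (EmaxStar (Q y) (fun x => μ x y / m y)).toReal : ℝ) : EReal) := by
      rw [ereal_coe_sum]
      refine Finset.sum_congr rfl fun y _ => ?_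
      rw [EReal.coe_mul, emaxStar_coe_toReal (Q y) (hQint y) (hνy μ hf y).1 (hνy μ hf y).2]
    rw [Ent, h1, h2, hentR, ← EReal.coe_neg, ← EReal.coe_sub]
  have hSG : ∀ (Φ : X → Y → ℝ) μ, Feasible n m μ →
      SocialGain P Q n m Φ μ = (((∑ x, ∑ y, μ x y * Φ x y) + entR μ : ℝ) : EReal) := by
    intro Φ μ hf
    rw [SocialGain, hEnt μ hf, ← EReal.coe_add]
  set val : (Fin K → ℝ) → ℝ := fun lam =>
      (∑ x, ∑ y, muOf lam x y * ∑ k, lam k * φ k x y) + entR (muOf lam) with hval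
  have hW : ∀ lam, Welfare P Q n m (fun x y => ∑ k, lam k * φ k x y)
      = ((val lam : ℝ) : EReal) := by
    intro lam
    apply le_antisymm
    · rw [Welfare]
      refine iSup_le ?_
      rintro ⟨μ', hf'⟩
      calc SocialGain P Q n m (fun x y => ∑ k, lam k * φ k x y) μ'
          ≤ SocialGain P Q n m (fun x y => ∑ k, lam k * φ k x y) (muOf lam) :=
            hμmax lam μ' hf'
      _ = ((val lam : ℝ) : EReal) := hSG _ _ (hμfeas lam)
    · rw [Welfare]
      exact le_iSup_of_le ⟨muOf lam, hμfeas lam⟩ (le_of_eq (hSG _ _ (hμfeas lam)).symm)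
  have hWR : ∀ lam, WelfareR P Q n m (fun x y => ∑ k, lam k * φ k x y) = val lam := by
    intro lam
    rw [WelfareR, hW lam, EReal.toReal_coe]
  have hmaxR : ∀ lam (μ'' : X → Y → ℝ), Feasible n m μ'' →
      (∑ x, ∑ y, μ'' x y * ∑ k, lam k * φ k x y) + entR μ'' ≤ val lam := by
    intro lam μ'' hf''
    have := hμmax lam μ'' hf''
    rw [hSG _ _ hf'', hSG _ _ (hμfeas lam)] at this
    exact EReal.coe_le_coe_iff.mp this
  have hphi : ∀ (μ : X → Y → ℝ) (lam : Fin K → ℝ),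
      (∑ x, ∑ y, μ x y * ∑ k, lam k * φ k x y)
        = ∑ k, lam k * ∑ x, ∑ y, μ x y * φ k x y := by
    intro μ lam
    calc ∑ x, ∑ y, μ x y * ∑ k, lam k * φ k x y
        = ∑ x, ∑ y, ∑ k, lam k * (μ x y * φ k x y) := by
          refine Finset.sum_congr rfl fun x _ => Finset.sum_congr rfl fun y _ => ?_
          rw [Finset.mul_sum]
          exact Finset.sum_congr rfl fun k _ => by ring
      _ = ∑ x, ∑ k, ∑ y, lam k * (μ x y * φ k x y) :=
          Finset.sum_congr rfl fun x _ => Finset.sum_comm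
      _ = ∑ k, ∑ x, ∑ y, lam k * (μ x y * φ k x y) := Finset.sum_comm
      _ = ∑ k, lam k * ∑ x, ∑ y, μ x y * φ k x y := by
          refine Finset.sum_congr rfl fun k _ => ?_
          rw [Finset.mul_sum]
          exact Finset.sum_congr rfl fun x _ => by rw [Finset.mul_sum]
  have hFOC : ∀ lam : Fin K → ℝ,
      ∑ k, (lam k - lamhat k) *
        ((∑ x, ∑ y, μhat x y * φ k x y) - (∑ x, ∑ y, muOf lam x y * φ k x y)) ≤ 0 := by
    intro lam
    have h1 := hlamhat lam
    rw [hWR lam, hWR lamhat] at h1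
    have h2 := hmaxR lamhat (muOf lam) (hμfeas lam)
    have h3 : val lam = (∑ x, ∑ y, muOf lam x y * ∑ k, lam k * φ k x y)
        + entR (muOf lam) := by rw [hval]
    have hE : ∑ k, (lam k - lamhat k) *
          ((∑ x, ∑ y, μhat x y * φ k x y) - (∑ x, ∑ y, muOf lam x y * φ k x y))
        = ((∑ x, ∑ y, μhat x y * ∑ k, lam k * φ k x y)
            - (∑ x, ∑ y, μhat x y * ∑ k, lamhat k * φ k x y))
          + ((∑ x, ∑ y, muOf lam x y * ∑ k, lamhat k * φ k x y)
            - (∑ x, ∑ y, muOf lam x y * ∑ k, lam k * φ k x y)) := by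
      rw [hphi μhat lam, hphi μhat lamhat, hphi (muOf lam) lam, hphi (muOf lam) lamhat]
      simp only [sub_mul, mul_sub, Finset.sum_sub_distrib]
      ring
    rw [hE]
    linarith
  set c : Fin K → ℝ := fun k =>
      (∑ x, ∑ y, μhat x y * φ k x y) - (∑ x, ∑ y, muOf lamhat x y * φ k x y) with hc
  suffices hc0 : ∀ k, c k = 0 by
    intro k
    have := hc0 k
    simp only [hc] at this
    linarith
  set lamseq : ℕ → Fin K → ℝ := fun j k => lamhat k + (1 / ((j : ℝ) + 1)) * c k with hlamseq
  have hFOCj : ∀ j : ℕ,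
      ∑ k, c k * ((∑ x, ∑ y, μhat x y * φ k x y)
        - (∑ x, ∑ y, muOf (lamseq j) x y * φ k x y)) ≤ 0 := by
    intro j
    have ht : (0 : ℝ) < 1 / ((j : ℝ) + 1) := by positivity
    have h := hFOC (lamseq j)
    have he : ∑ k, (lamseq j k - lamhat k) *
          ((∑ x, ∑ y, μhat x y * φ k x y) - (∑ x, ∑ y, muOf (lamseq j) x y * φ k x y))
        = (1 / ((j : ℝ) + 1)) * ∑ k, c k * ((∑ x, ∑ y, μhat x y * φ k x y)
            - (∑ x, ∑ y, muOf (lamseq j) x y * φ k x y)) := by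
      rw [Finset.mul_sum]
      refine Finset.sum_congr rfl fun k _ => ?_
      simp only [hlamseq]
      ring
    rw [he] at h
    by_contra hpos
    push_neg at hpos
    nlinarith [mul_pos ht hpos]
  -- compactness
  have hmemS : ∀ μ, Feasible n m μ →
      μ ∈ Set.univ.pi (fun x : X => Set.univ.pi fun _ : Y => Set.Icc (0 : ℝ) (n x)) := by
    intro μ hf
    rw [Set.mem_univ_pi]
    intro x
    rw [Set.mem_univ_pi]
    intro y
    exact ⟨hf.1 x y, le_trans (Finset.single_le_sum (fun y _ => hf.1 x y)
      (Finset.mem_univ y)) (hf.2.1 x)⟩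
  obtain ⟨μstar, hμstarS, σ, hσ, hσtend⟩ :=
    (isCompact_univ_pi fun x : X => isCompact_univ_pi fun _ : Y =>
      isCompact_Icc).tendsto_subseq (x := fun j => muOf (lamseq j))
      (fun j => hmemS _ (hμfeas (lamseq j)))
  have hcoord : ∀ x y, Tendsto (fun j => muOf (lamseq (σ j)) x y) atTop (𝓝 (μstar x y)) := by
    intro x y
    exact tendsto_pi_nhds.mp (tendsto_pi_nhds.mp hσtend x) y
  have htt : Tendsto (fun j => 1 / ((σ j : ℝ) + 1)) atTop (𝓝 0) :=
    tendsto_one_div_add_atTop_nhds_zero_nat.comp hσ.tendsto_atTop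
  have hlamt : ∀ k, Tendsto (fun j => lamseq (σ j) k) atTop (𝓝 (lamhat k)) := by
    intro k
    have := (htt.mul_const (c k)).const_add (lamhat k)
    simpa [hlamseq] using this
  have hstarfeas : Feasible n m μstar := by
    refine ⟨fun x y => ?_, fun x => ?_, fun y => ?_⟩
    · exact ge_of_tendsto (hcoord x y)
        (Eventually.of_forall fun j => (hμfeas (lamseq (σ j))).1 x y)
    · exact le_of_tendsto (tendsto_finset_sum _ fun y _ => hcoord x y)
        (Eventually.of_forall fun j => (hμfeas (lamseq (σ j))).2.1 x)
    · exact le_of_tendsto (tendsto_finset_sum _ fun x _ => hcoord x y)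
        (Eventually.of_forall fun j => (hμfeas (lamseq (σ j))).2.2 y)
  -- μstar is a maximizer at lamhat
  have hstarmaxR : ∀ (μ'' : X → Y → ℝ), Feasible n m μ'' →
      (∑ x, ∑ y, μ'' x y * ∑ k, lamhat k * φ k x y) + entR μ''
        ≤ (∑ x, ∑ y, μstar x y * ∑ k, lamhat k * φ k x y) + entR μstar := by
    intro μ'' hf''
    have hC0 : (0 : ℝ) < (∑ x, n x) + (∑ y, m y) :=
      add_pos (Finset.sum_pos (fun x _ => hn x) Finset.univ_nonempty)
        (Finset.sum_pos (fun y _ => hm y) Finset.univ_nonempty)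
    refine le_of_forall_pos_le_add fun ε hε => ?_
    set δ : ℝ := ε / ((∑ x, n x) + (∑ y, m y)) with hδ
    have hδpos : 0 < δ := div_pos hε hC0
    choose U hU using fun x =>
      rstar_lt (P x) (hPint x) (hνx μstar hstarfeas x).1 (hνx μstar hstarfeas x).2 hδpos
    choose V hV using fun y =>
      rstar_lt (Q y) (hQint y) (hνy μstar hstarfeas y).1 (hνy μstar hstarfeas y).2 hδpos
    set F : (X → Y → ℝ) → ℝ := fun μ =>
        -(∑ x, n x * ((∑ y, (μ x y / n x) * U x y) - Emax (P x) (U x)))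
          - ∑ y, m y * ((∑ x, (μ x y / m y) * V y x) - Emax (Q y) (V y)) with hFdef
    have hEntF : ∀ μ, Feasible n m μ → entR μ ≤ F μ := by
      intro μ hf
      have hA : ∑ x, n x * ((∑ y, (μ x y / n x) * U x y) - Emax (P x) (U x))
          ≤ ∑ x, n x * (EmaxStar (P x) (fun y => μ x y / n x)).toReal :=
        Finset.sum_le_sum fun x _ => mul_le_mul_of_nonneg_left
          (term_le_rstar (P x) (hPint x) (hνx μ hf x).1 (hνx μ hf x).2 (U x)) (hn x).le
      have hB : ∑ y, m y * ((∑ x, (μ x y / m y) * V y x) - Emax (Q y) (V y))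
          ≤ ∑ y, m y * (EmaxStar (Q y) (fun x => μ x y / m y)).toReal :=
        Finset.sum_le_sum fun y _ => mul_le_mul_of_nonneg_left
          (term_le_rstar (Q y) (hQint y) (hνy μ hf y).1 (hνy μ hf y).2 (V y)) (hm y).le
      simp only [hentR, hFdef]
      linarith
    have hδC0 : δ * ((∑ x, n x) + (∑ y, m y)) = ε := by
      rw [hδ, div_mul_cancel₀ _ hC0.ne']
    have hFle : F μstar ≤ entR μstar + ε := by
      have hAx : ∑ x, n x * (EmaxStar (P x) (fun y => μstar x y / n x)).toReal
          ≤ (∑ x, n x * ((∑ y, (μstar x y / n x) * U x y) - Emax (P x) (U x)))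
            + δ * ∑ x, n x := by
        have hterm : ∀ x ∈ Finset.univ, n x * (EmaxStar (P x) (fun y => μstar x y / n x)).toReal
            ≤ n x * ((∑ y, (μstar x y / n x) * U x y) - Emax (P x) (U x)) + δ * n x := by
          intro x _
          have h' := hU x
          have h2 : (EmaxStar (P x) (fun y => μstar x y / n x)).toReal
              ≤ ((∑ y, (μstar x y / n x) * U x y) - Emax (P x) (U x)) + δ := by linarith
          calc n x * (EmaxStar (P x) (fun y => μstar x y / n x)).toReal
              ≤ n x * (((∑ y, (μstar x y / n x) * U x y) - Emax (P x) (U x)) + δ) :=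
                mul_le_mul_of_nonneg_left h2 (hn x).le
          _ = n x * ((∑ y, (μstar x y / n x) * U x y) - Emax (P x) (U x)) + δ * n x := by ring
        calc ∑ x, n x * (EmaxStar (P x) (fun y => μstar x y / n x)).toReal
            ≤ ∑ x, (n x * ((∑ y, (μstar x y / n x) * U x y) - Emax (P x) (U x)) + δ * n x) :=
              Finset.sum_le_sum hterm
        _ = _ := by rw [Finset.sum_add_distrib, ← Finset.mul_sum]
      have hAy : ∑ y, m y * (EmaxStar (Q y) (fun x => μstar x y / m y)).toReal
          ≤ (∑ y, m y * ((∑ x, (μstar x y / m y) * V y x) - Emax (Q y) (V y)))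
            + δ * ∑ y, m y := by
        have hterm : ∀ y ∈ Finset.univ, m y * (EmaxStar (Q y) (fun x => μstar x y / m y)).toReal
            ≤ m y * ((∑ x, (μstar x y / m y) * V y x) - Emax (Q y) (V y)) + δ * m y := by
          intro y _
          have h' := hV y
          have h2 : (EmaxStar (Q y) (fun x => μstar x y / m y)).toReal
              ≤ ((∑ x, (μstar x y / m y) * V y x) - Emax (Q y) (V y)) + δ := by linarith
          calc m y * (EmaxStar (Q y) (fun x => μstar x y / m y)).toReal
              ≤ m y * (((∑ x, (μstar x y / m y) * V y x) - Emax (Q y) (V y)) + δ) :=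
                mul_le_mul_of_nonneg_left h2 (hm y).le
          _ = m y * ((∑ x, (μstar x y / m y) * V y x) - Emax (Q y) (V y)) + δ * m y := by ring
        calc ∑ y, m y * (EmaxStar (Q y) (fun x => μstar x y / m y)).toReal
            ≤ ∑ y, (m y * ((∑ x, (μstar x y / m y) * V y x) - Emax (Q y) (V y)) + δ * m y) :=
              Finset.sum_le_sum hterm
        _ = _ := by rw [Finset.sum_add_distrib, ← Finset.mul_sum]
      simp only [hentR, hFdef]
      have : δ * (∑ x, n x) + δ * (∑ y, m y) = ε := by rw [← mul_add, hδC0]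
      linarith
    have hineq_j : ∀ j : ℕ,
        (∑ x, ∑ y, μ'' x y * ∑ k, lamseq (σ j) k * φ k x y) + entR μ''
          ≤ (∑ x, ∑ y, muOf (lamseq (σ j)) x y * ∑ k, lamseq (σ j) k * φ k x y)
            + F (muOf (lamseq (σ j))) := by
      intro j
      have h1 := hmaxR (lamseq (σ j)) μ'' hf''
      have h2 := hEntF (muOf (lamseq (σ j))) (hμfeas (lamseq (σ j)))
      rw [hval] at h1
      simp only at h1
      linarith
    have hL : Tendsto (fun j => (∑ x, ∑ y, μ'' x y * ∑ k, lamseq (σ j) k * φ k x y) + entR μ'')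
        atTop (𝓝 ((∑ x, ∑ y, μ'' x y * ∑ k, lamhat k * φ k x y) + entR μ'')) := by
      refine Tendsto.add ?_ tendsto_const_nhds
      exact tendsto_finset_sum _ fun x _ => tendsto_finset_sum _ fun y _ =>
        Tendsto.const_mul _ (tendsto_finset_sum _ fun k _ => (hlamt k).mul_const _)
    have hR : Tendsto (fun j =>
        (∑ x, ∑ y, muOf (lamseq (σ j)) x y * ∑ k, lamseq (σ j) k * φ k x y)
          + F (muOf (lamseq (σ j)))) atTop
        (𝓝 ((∑ x, ∑ y, μstar x y * ∑ k, lamhat k * φ k x y) + F μstar)) := by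
      refine Tendsto.add ?_ ?_
      · exact tendsto_finset_sum _ fun x _ => tendsto_finset_sum _ fun y _ =>
          (hcoord x y).mul (tendsto_finset_sum _ fun k _ => (hlamt k).mul_const _)
      · simp only [hFdef]
        refine Tendsto.sub (Tendsto.neg ?_) ?_
        · exact tendsto_finset_sum _ fun x _ => Tendsto.const_mul _
            (Tendsto.sub_const (tendsto_finset_sum _ fun y _ =>
              ((hcoord x y).div_const _).mul_const _) _)
        · exact tendsto_finset_sum _ fun y _ => Tendsto.const_mul _
            (Tendsto.sub_const (tendsto_finset_sum _ fun x _ =>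
              ((hcoord x y).div_const _).mul_const _) _)
    have hlim := le_of_tendsto_of_tendsto' hL hR hineq_j
    linarith
  have hstar_eq : μstar = muOf lamhat := by
    refine hμuniq lamhat μstar hstarfeas ?_
    intro μ'' hf''
    rw [hSG _ _ hf'', hSG _ _ hstarfeas]
    exact EReal.coe_le_coe_iff.mpr (hstarmaxR μ'' hf'')
  have h1 : ∀ k, Tendsto (fun j => ∑ x, ∑ y, muOf (lamseq (σ j)) x y * φ k x y)
      atTop (𝓝 (∑ x, ∑ y, μstar x y * φ k x y)) := fun k =>
    tendsto_finset_sum _ fun x _ => tendsto_finset_sum _ fun y _ => (hcoord x y).mul_const _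
  have h2 : ∀ k : Fin K, c k = (∑ x, ∑ y, μhat x y * φ k x y)
      - (∑ x, ∑ y, μstar x y * φ k x y) := by
    intro k
    rw [hc, hstar_eq]
  have hlimd : Tendsto (fun j => ∑ k, c k * ((∑ x, ∑ y, μhat x y * φ k x y)
      - (∑ x, ∑ y, muOf (lamseq (σ j)) x y * φ k x y))) atTop (𝓝 (∑ k, c k * c k)) := by
    refine tendsto_finset_sum _ fun k _ => ?_
    have := Tendsto.const_mul (c k) (Tendsto.const_sub
      (∑ x, ∑ y, μhat x y * φ k x y) (h1 k))
    rw [← h2 k] at this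
    exact this
  have hsumle : ∑ k, c k * c k ≤ 0 :=
    le_of_tendsto hlimd (Eventually.of_forall fun j => hFOCj (σ j))
  have hsum0 : ∑ k, c k * c k = 0 :=
    le_antisymm hsumle (Finset.sum_nonneg fun k _ => mul_self_nonneg _)
  intro k
  exact mul_self_eq_zero.mp
    ((Finset.sum_eq_zero_iff_of_nonneg (fun k _ => mul_self_nonneg (c k))).mp hsum0 k
      (Finset.mem_univ k))

end
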